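/- (Lemma 2.) Let A ∈ ℝ^{m×n}, let A_r be its best rank-r approximation, set ε = ‖A − A_r‖_F and assume ε > 0. Let Ω consist of s index pairs drawn independently and uniformly at random from [m]×[n], and suppose s ≥ (8 m n ‖A − A_r‖_∞² / (3 ε²)) · β log(n) for some β > 1. Then with probability at least 1 − n^{−β}, one has ⟨R_Ω(A − A_r), A − A_r⟩ ≤ 2 s ε² / (m n), i.e. √(⟨R_Ω(A − A_r), A − A_r⟩) ≤ ε·√(2s/(mn)). -/

import Mathlib

open scoped BigOperators
open Matrix
open MeasureTheory

namespace MC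

variable {m n r s : ℕ}

/-- Trace inner product `⟨X,Y⟩ = trace(Xᵀ Y)`. -/
def ip (A B : Matrix (Fin m) (Fin n) ℝ) : ℝ := ∑ i, ∑ j, A i j * B i j

/-- Frobenius norm. -/
noncomputable def fro (A : Matrix (Fin m) (Fin n) ℝ) : ℝ := Real.sqrt (ip A A)

/-- Largest absolute value of an entry. -/
noncomputable def infNorm (A : Matrix (Fin m) (Fin n) ℝ) : ℝ := ⨆ i, ⨆ j, |A i j|

/-- Nuclear norm: sum of singular values. -/
noncomputable def nuclearNorm (A : Matrix (Fin m) (Fin n) ℝ) : ℝ :=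
  ∑ j, Real.sqrt ((show (Aᵀ * A).IsHermitian by
    simpa using Matrix.isHermitian_conjTranspose_mul_self A).eigenvalues j)

/-- Spectral norm: largest singular value. -/
noncomputable def specNorm (A : Matrix (Fin m) (Fin n) ℝ) : ℝ :=
  ⨆ j, Real.sqrt ((show (Aᵀ * A).IsHermitian by
    simpa using Matrix.isHermitian_conjTranspose_mul_self A).eigenvalues j)

/-- Sampling operator for a multiset of index pairs. -/
def RΩ (Ω : Multiset (Fin m × Fin n)) (Z : Matrix (Fin m) (Fin n) ℝ) :
    Matrix (Fin m) (Fin n) ℝ :=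
  Matrix.of fun i j => (Ω.count (i, j)) * Z i j

def PT (U : Matrix (Fin m) (Fin r) ℝ) (V : Matrix (Fin n) (Fin r) ℝ)
    (Z : Matrix (Fin m) (Fin n) ℝ) : Matrix (Fin m) (Fin n) ℝ :=
  U * Uᵀ * Z + Z * (V * Vᵀ) - U * Uᵀ * Z * (V * Vᵀ)

def PTperp (U : Matrix (Fin m) (Fin r) ℝ) (V : Matrix (Fin n) (Fin r) ℝ)
    (Z : Matrix (Fin m) (Fin n) ℝ) : Matrix (Fin m) (Fin n) ℝ :=
  (1 - U * Uᵀ) * Z * (1 - V * Vᵀ)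

/-- Objective of nuclear-norm regularized least squares. -/
noncomputable def obj (Ω : Multiset (Fin m × Fin n)) (A : Matrix (Fin m) (Fin n) ℝ)
    (lam : ℝ) (B : Matrix (Fin m) (Fin n) ℝ) : ℝ :=
  (1 / 2) * (Ω.map fun p => (B p.1 p.2 - A p.1 p.2) ^ 2).sum + lam * nuclearNorm B

/-- Uniform probability measure on index pairs. -/
noncomputable def unifPair (m n : ℕ) : Measure (Fin m × Fin n) :=
  (Fintype.card (Fin m × Fin n) : ENNReal)⁻¹ • Measure.count

/-- Law of `s` i.i.d. uniform index pairs. -/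
noncomputable def sampleMeasure (m n s : ℕ) : Measure (Fin s → Fin m × Fin n) :=
  Measure.pi fun _ => unifPair m n

/-- The multiset of sampled indices. -/
def toMS (ω : Fin s → Fin m × Fin n) : Multiset (Fin m × Fin n) :=
  Multiset.map ω Finset.univ.val

end MC

/-!
Sampling an entry `p` of `Z = A - A_r` uniformly at random, `Z_p²` takes values in
`[0, ‖Z‖_∞²]` and has mean `‖Z‖_F² / (mn)`; under i.i.d. sampling `⟨R_Ω Z, Z⟩` is the sum of `s`
such copies. Convexity of `exp` on `[0, c]` bounds the moment generating function of a variable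
with values in `[0, c]` by that of a scaled Bernoulli variable, and the Chernoff bound at
`t = log 2 / ‖Z‖_∞²` gives that the sum reaches twice its mean with probability at most
`exp (-(2 log 2 - 1) s ‖Z‖_F² / (mn ‖Z‖_∞²))`. Since `2 log 2 - 1 > 3/8`, the assumption on `s`
makes this at most `n^(-β)`.
-/

open ProbabilityTheory Real

lemma exp_mul_le_one_add_div_mul {t c x : ℝ} (hc : 0 < c) (hx0 : 0 ≤ x) (hxc : x ≤ c) :
    exp (t * x) ≤ 1 + x / c * (exp (t * c) - 1) := by
  have h := convexOn_exp.2 (Set.mem_univ 0) (Set.mem_univ (t * c))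
    (sub_nonneg.2 ((div_le_one hc).2 hxc)) (div_nonneg hx0 hc.le) (sub_add_cancel 1 (x / c))
  simp only [smul_eq_mul, mul_zero, zero_add, exp_zero] at h
  rw [show x / c * (t * c) = t * x by field_simp] at h
  linarith

section

variable {Ω : Type*} {mΩ : MeasurableSpace Ω} {μ : Measure Ω} [IsProbabilityMeasure μ]
  {X : Ω → ℝ} {c t : ℝ}

lemma mgf_le_exp_of_nonneg_of_le (hX : AEMeasurable X μ) (hc : 0 < c)
    (hX0 : ∀ᵐ ω ∂μ, 0 ≤ X ω) (hXc : ∀ᵐ ω ∂μ, X ω ≤ c) :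
    mgf X μ t ≤ exp ((exp (t * c) - 1) / c * μ[X]) := by
  have hXint : Integrable X μ := by
    refine .of_bound hX.aestronglyMeasurable c ?_
    filter_upwards [hX0, hXc] with ω h0 h1
    rwa [Real.norm_eq_abs, abs_of_nonneg h0]
  have hbound_int : Integrable (fun ω => 1 + X ω / c * (exp (t * c) - 1)) μ :=
    (integrable_const 1).add ((hXint.div_const c).mul_const _)
  calc mgf X μ t ≤ ∫ ω, 1 + X ω / c * (exp (t * c) - 1) ∂μ := by
        refine integral_mono_of_nonneg (.of_forall fun ω => (exp_pos _).le) hbound_int ?_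
        filter_upwards [hX0, hXc] with ω h0 h1 using exp_mul_le_one_add_div_mul hc h0 h1
    _ = 1 + (exp (t * c) - 1) / c * μ[X] := by
        rw [integral_add (integrable_const 1) ((hXint.div_const c).mul_const _),
          integral_mul_const, integral_div]
        simp only [integral_const, probReal_univ, smul_eq_mul, mul_one, add_right_inj]
        ring
    _ ≤ _ := by linarith [add_one_le_exp ((exp (t * c) - 1) / c * μ[X])]

end

section

variable {α ι : Type*} [Fintype ι] {mα : MeasurableSpace α} {ν : Measure α}
  [IsProbabilityMeasure ν] {f : α → ℝ} {t : ℝ}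

lemma measureReal_pi_sum_ge_le (hf : Measurable f) (ht : 0 ≤ t)
    (hint : Integrable (fun x => exp (t * f x)) ν) (a : ℝ) :
    (Measure.pi fun _ : ι => ν).real {ω | a ≤ ∑ i, f (ω i)} ≤
      exp (-t * a) * mgf f ν t ^ Fintype.card ι := by
  have hindep : iIndepFun (fun i (ω : ι → α) => f (ω i)) (Measure.pi fun _ => ν) :=
    iIndepFun_pi fun _ => hf.aemeasurable
  have hmeas : ∀ i, Measurable fun ω : ι → α => f (ω i) := fun i => hf.comp (measurable_pi_apply i)
  have hint_i : ∀ i, Integrable (fun ω : ι → α => exp (t * f (ω i))) (Measure.pi fun _ => ν) :=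
    fun i => (measurePreserving_eval (fun _ => ν) i).integrable_comp_of_integrable hint
  have hmgf : ∀ i, mgf (fun ω : ι → α => f (ω i)) (Measure.pi fun _ => ν) t = mgf f ν t := by
    intro i
    have hmap := (measurePreserving_eval (fun _ => ν) i).map_eq
    have h := mgf_map (X := f) (t := t) (measurable_pi_apply i).aemeasurable
      (hmap ▸ hint.aestronglyMeasurable)
    rwa [hmap, eq_comm] at h
  have h := measure_ge_le_exp_mul_mgf (X := ∑ i, fun ω : ι → α => f (ω i)) a ht
    (hindep.integrable_exp_mul_sum hmeas fun i _ => hint_i i)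
  rw [hindep.mgf_sum hmeas, Finset.prod_congr rfl fun i _ => hmgf i, Finset.prod_const,
    Finset.card_univ] at h
  simpa only [Finset.sum_apply] using h

end

lemma ofReal_one_sub_le_of_measureReal_compl_le {α : Type*} {mα : MeasurableSpace α}
    {μ : Measure α} [IsProbabilityMeasure μ] {E : Set α} {δ : ℝ} (hE : MeasurableSet E)
    (h : μ.real Eᶜ ≤ δ) : ENNReal.ofReal (1 - δ) ≤ μ E := by
  rw [← ofReal_measureReal]
  exact ENNReal.ofReal_le_ofReal (by linarith [probReal_compl_eq_one_sub (μ := μ) hE])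

namespace MC

variable {m n s : ℕ}

instance [NeZero m] [NeZero n] : IsProbabilityMeasure (unifPair m n) where
  measure_univ := by
    rw [unifPair, Measure.smul_apply, Measure.count_univ, ENat.card_eq_coe_fintype_card,
      smul_eq_mul, ENat.toENNReal_coe, ENNReal.inv_mul_cancel] <;>
      simp [NeZero.ne, ENNReal.mul_eq_top]

instance [NeZero m] [NeZero n] : IsProbabilityMeasure (sampleMeasure m n s) :=
  inferInstanceAs (IsProbabilityMeasure (Measure.pi _))

lemma integral_unifPair (f : Fin m × Fin n → ℝ) :
    ∫ p, f p ∂unifPair m n = (∑ p, f p) / (m * n) := by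
  simp [unifPair, integral_smul_measure, div_eq_inv_mul]

lemma ip_self_eq_sum_sq (Z : Matrix (Fin m) (Fin n) ℝ) :
    ip Z Z = ∑ p : Fin m × Fin n, Z p.1 p.2 ^ 2 := by
  simp [ip, sq, Fintype.sum_prod_type]

lemma fro_sq_eq_sum_sq (Z : Matrix (Fin m) (Fin n) ℝ) :
    fro Z ^ 2 = ∑ p : Fin m × Fin n, Z p.1 p.2 ^ 2 := by
  rw [fro, Real.sq_sqrt (ip_self_eq_sum_sq Z ▸ by positivity), ip_self_eq_sum_sq]

lemma ip_RΩ_toMS (Z : Matrix (Fin m) (Fin n) ℝ) (ω : Fin s → Fin m × Fin n) :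
    ip (RΩ (toMS ω) Z) Z = ∑ k, Z (ω k).1 (ω k).2 ^ 2 := by
  calc ip (RΩ (toMS ω) Z) Z = ∑ p, ((toMS ω).count p : ℝ) * Z p.1 p.2 ^ 2 := by
        simp [ip, RΩ, Fintype.sum_prod_type, sq, mul_assoc]
    _ = ∑ p, ∑ k with ω k = p, Z p.1 p.2 ^ 2 := by
        refine Finset.sum_congr rfl fun p _ => ?_
        rw [Finset.sum_const, nsmul_eq_mul, toMS, Multiset.count_map]
        simp only [eq_comm (a := p)]
        rfl
    _ = ∑ k, Z (ω k).1 (ω k).2 ^ 2 := Finset.sum_fiberwise' Finset.univ ω fun p => Z p.1 p.2 ^ 2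

lemma sq_le_infNorm_sq (Z : Matrix (Fin m) (Fin n) ℝ) (i : Fin m) (j : Fin n) :
    Z i j ^ 2 ≤ infNorm Z ^ 2 := by
  have hrow : |Z i j| ≤ ⨆ j', |Z i j'| :=
    le_ciSup (f := fun j' => |Z i j'|) (Set.finite_range _).bddAbove j
  have hall : (⨆ j', |Z i j'|) ≤ infNorm Z :=
    le_ciSup (f := fun i' => ⨆ j', |Z i' j'|) (Set.finite_range _).bddAbove i
  exact sq_le_sq' (by linarith [neg_abs_le (Z i j)]) (by linarith [le_abs_self (Z i j)])

lemma fro_sq_le (Z : Matrix (Fin m) (Fin n) ℝ) : fro Z ^ 2 ≤ m * n * infNorm Z ^ 2 := by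
  calc fro Z ^ 2 ≤ ∑ _p : Fin m × Fin n, infNorm Z ^ 2 := by
        rw [fro_sq_eq_sum_sq]
        exact Finset.sum_le_sum fun p _ => sq_le_infNorm_sq Z p.1 p.2
    _ = m * n * infNorm Z ^ 2 := by simp [mul_assoc]

lemma measureReal_ip_RΩ_toMS_ge_le [NeZero m] [NeZero n] (Z : Matrix (Fin m) (Fin n) ℝ)
    (hc : 0 < infNorm Z ^ 2) :
    (sampleMeasure m n s).real {ω | 2 * s * fro Z ^ 2 / (m * n) ≤ ip (RΩ (toMS ω) Z) Z} ≤
      exp (-(2 * log 2 - 1) * (s * fro Z ^ 2 / (m * n * infNorm Z ^ 2))) := by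
  set c := infNorm Z ^ 2
  set f : Fin m × Fin n → ℝ := fun p => Z p.1 p.2 ^ 2
  set t := log 2 / c
  have hmgf : mgf f (unifPair m n) t ≤ exp (fro Z ^ 2 / (m * n * c)) := by
    refine (mgf_le_exp_of_nonneg_of_le (measurable_of_finite f).aemeasurable hc
      (.of_forall fun p => sq_nonneg _)
      (.of_forall fun p => sq_le_infNorm_sq Z p.1 p.2)).trans_eq ?_
    rw [div_mul_cancel₀ _ hc.ne', exp_log two_pos, integral_unifPair, ← fro_sq_eq_sum_sq]
    congr 1
    field_simp
    ring
  have hchernoff := measureReal_pi_sum_ge_le (ι := Fin s) (ν := unifPair m n)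
    (measurable_of_finite f) (div_nonneg (log_nonneg one_le_two) hc.le) .of_finite
    (2 * s * fro Z ^ 2 / (m * n))
  rw [Fintype.card_fin] at hchernoff
  simp_rw [ip_RΩ_toMS]
  calc _ ≤ exp (-t * (2 * s * fro Z ^ 2 / (m * n))) * mgf f (unifPair m n) t ^ s := hchernoff
    _ ≤ exp (-t * (2 * s * fro Z ^ 2 / (m * n))) * exp (fro Z ^ 2 / (m * n * c)) ^ s := by
        gcongr
        exact mgf_nonneg
    _ = _ := by
        rw [← exp_nat_mul, ← exp_add]
        congr 1
        simp only [t]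
        field_simp
        ring

theorem stmt3_general (m n s : ℕ)
    (A : Matrix (Fin m) (Fin n) ℝ)
    -- the best rank-`r` approximation of `A`
    (Ar : Matrix (Fin m) (Fin n) ℝ)
    (β : ℝ)
    (hε : 0 < fro (A - Ar))
    (hs : (8 * m * n * (infNorm (A - Ar)) ^ 2 / (3 * (fro (A - Ar)) ^ 2)) * β *
        Real.log n ≤ (s : ℝ)) :
    ENNReal.ofReal (1 - (n : ℝ) ^ (-β)) ≤
      sampleMeasure m n s
        {ω | ip (RΩ (toMS ω) (A - Ar)) (A - Ar)
              ≤ 2 * s * (fro (A - Ar)) ^ 2 / (m * n)} := by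
  set Z := A - Ar
  have hmnc : 0 < m * n * infNorm Z ^ 2 := (pow_pos hε 2).trans_le (fro_sq_le Z)
  have : NeZero m := ⟨by rintro rfl; simp at hmnc⟩
  have : NeZero n := ⟨by rintro rfl; simp at hmnc⟩
  have hc : 0 < infNorm Z ^ 2 := pos_of_mul_pos_right hmnc (by positivity)
  set G := s * fro Z ^ 2 / (m * n * infNorm Z ^ 2)
  have hβG : β * log n ≤ 3 / 8 * G := by
    have hinf : infNorm Z ≠ 0 := fun h => by simp [h] at hc
    have hf : 0 < fro Z ^ 2 := pow_pos hε 2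
    calc β * log n = 8 * m * n * infNorm Z ^ 2 / (3 * fro Z ^ 2) * β * log n *
          (3 * fro Z ^ 2 / (8 * (m * n * infNorm Z ^ 2))) := by field_simp [NeZero.ne]
      _ ≤ s * (3 * fro Z ^ 2 / (8 * (m * n * infNorm Z ^ 2))) := by gcongr
      _ = 3 / 8 * G := by ring
  refine ofReal_one_sub_le_of_measureReal_compl_le (Set.to_countable _).measurableSet ?_
  calc (sampleMeasure m n s).real {ω | ip (RΩ (toMS ω) Z) Z ≤ 2 * s * fro Z ^ 2 / (m * n)}ᶜ
      _ ≤ (sampleMeasure m n s).real {ω | 2 * s * fro Z ^ 2 / (m * n) ≤ ip (RΩ (toMS ω) Z) Z} :=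
        measureReal_mono fun _ h => le_of_not_ge (Set.notMem_ofPred_iff.1 h)
      _ ≤ exp (-(2 * log 2 - 1) * G) := measureReal_ip_RΩ_toMS_ge_le Z hc
      _ ≤ exp (-(β * log n)) := exp_le_exp.2 (by nlinarith [log_two_gt_d9, (by positivity : 0 ≤ G)])
      _ = (n : ℝ) ^ (-β) := by rw [rpow_def_of_pos (Nat.cast_pos.2 (NeZero.pos n))]; ring_nf

/-- Lemma 2: if `Ω` consists of `s` indices drawn i.i.d. uniformly
from `[m]×[n]` and `s ≥ (8mn‖A−A_r‖_∞²/(3ε²))·β·log n` for some `β > 1`, then with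
probability at least `1 − n^{−β}` one has
`⟨R_Ω(A − A_r), A − A_r⟩ ≤ 2sε²/(mn)` where `ε = ‖A − A_r‖_F`. -/
theorem stmt3 (m n r s : ℕ) (hm : 0 < m) (hmn : m ≤ n) (hrm : r ≤ m)
    -- singular value decomposition of `A`
    (σ : Fin m → ℝ) (u : Fin m → Fin m → ℝ) (v : Fin m → Fin n → ℝ)
    (hσdec : ∀ i j : Fin m, i ≤ j → σ j ≤ σ i)
    (hσ0 : ∀ i, 0 ≤ σ i)
    (hu : ∀ i i' : Fin m, ∑ k, u i k * u i' k = if i = i' then 1 else 0)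
    (hv : ∀ i i' : Fin m, ∑ k, v i k * v i' k = if i = i' then 1 else 0)
    (A : Matrix (Fin m) (Fin n) ℝ)
    (hA : A = ∑ i, σ i • Matrix.vecMulVec (u i) (v i))
    -- the best rank-`r` approximation of `A`
    (Ar : Matrix (Fin m) (Fin n) ℝ)
    (hAr : Ar = ∑ i ∈ Finset.univ.filter (fun i : Fin m => (i : ℕ) < r),
        σ i • Matrix.vecMulVec (u i) (v i))
    (β : ℝ) (hβ : 1 < β)
    (hε : 0 < fro (A - Ar))
    (hs : (8 * m * n * (infNorm (A - Ar)) ^ 2 / (3 * (fro (A - Ar)) ^ 2)) * β *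
        Real.log n ≤ (s : ℝ)) :
    ENNReal.ofReal (1 - (n : ℝ) ^ (-β)) ≤
      sampleMeasure m n s
        {ω | ip (RΩ (toMS ω) (A - Ar)) (A - Ar)
              ≤ 2 * s * (fro (A - Ar)) ^ 2 / (m * n)} :=
  stmt3_general m n s A Ar β hε hs

end MC
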